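/- arXiv:math/0509225 — 9 statements merged into one kernel-verified Lean document; each statement's English description precedes it below -/
import Mathlib

section
/- Let R be an n×n Hermitian positive semidefinite complex matrix, B ∈ ℂ^{n×m} of rank m, and suppose Γ₁, Γ₂ ∈ ℂ^{m×n} are both minimizers, with respect to the Loewner order, of q_R(Γ) = Γ R Γ* subject to Γ B = I_m, and Γ₁ ≠ Γ₂. Then there exists a nonzero vector v ∈ ℂ^n with B* v = 0 and R v = 0. Consequently, the minimizer is unique if and only if the n×(n+m) block matrix [R B] has rank n. -/
/-!
The midpoint `Γ = (Γ₁ + Γ₂) / 2` is again feasible, and the parallelogram law gives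
`2 (Γ R Γ* - Γ₁ R Γ₁*) + 2 (Γ R Γ* - Γ₂ R Γ₂*) = -Δ R Δ*` with `Δ = Γ₁ - Γ₂`. By minimality the left
side is positive semidefinite, and so is `Δ R Δ*`, hence `Δ R Δ* = 0` and then `R Δ* = 0`.
Since also `B* Δ* = (Δ B)* = 0`, any nonzero column of `Δ*` is a common null vector of `R` and `B*`;
its conjugate is a nonzero left null vector of `[R B]`, so this matrix has rank `< n`.
-/

open Matrix ComplexOrder

namespace Matrix

section Semiring

variable {α : Type*} [Semiring α] {l m n k : Type*} [Fintype n] [Fintype k] [DecidableEq k]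

theorem exists_ne_zero_mulVec_eq_zero_of_mul_eq_zero {X : Matrix n k α} (hX : X ≠ 0)
    {A : Matrix l n α} {C : Matrix m n α} (hA : A * X = 0) (hC : C * X = 0) :
    ∃ v ≠ 0, A *ᵥ v = 0 ∧ C *ᵥ v = 0 := by
  obtain ⟨j, hj⟩ : ∃ j, X *ᵥ Pi.single j 1 ≠ 0 := by
    by_contra! h
    exact hX (ext_of_mulVec_single fun j ↦ by rw [h, zero_mulVec])
  exact ⟨_, hj, by rw [mulVec_mulVec, hA, zero_mulVec], by rw [mulVec_mulVec, hC, zero_mulVec]⟩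

end Semiring

theorem rank_lt_card_height_of_vecMul_eq_zero {K : Type*} [Field K] {m k : Type*} [Fintype m]
    [Fintype k] {A : Matrix m k K} {v : m → K} (hv : v ≠ 0) (hvA : v ᵥ* A = 0) :
    A.rank < Fintype.card m := by
  have hker : 0 < Module.finrank K (LinearMap.ker Aᵀ.mulVecLin) :=
    Module.finrank_pos_iff_exists_ne_zero.mpr
      ⟨⟨v, by rw [LinearMap.mem_ker, mulVecLin_apply, mulVec_transpose, hvA]⟩,
        fun h ↦ hv (congrArg Subtype.val h)⟩
  have hrank := Aᵀ.mulVecLin.finrank_range_add_finrank_ker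
  rw [Module.finrank_fintype_fun_eq_card] at hrank
  rw [← rank_transpose, rank]
  omega

variable {𝕜 : Type*} [RCLike 𝕜] {m n : Type*}

theorem rank_fromCols_lt_of_conjTranspose_mulVec_eq_zero {k₁ k₂ : Type*} [Fintype n]
    [Fintype k₁] [Fintype k₂] {A : Matrix n k₁ 𝕜} {B : Matrix n k₂ 𝕜} {v : n → 𝕜} (hv : v ≠ 0)
    (hAv : Aᴴ *ᵥ v = 0) (hBv : Bᴴ *ᵥ v = 0) : (fromCols A B).rank < Fintype.card n := by
  refine rank_lt_card_height_of_vecMul_eq_zero (v := star v) (star_ne_zero.mpr hv) ?_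
  rw [vecMul_fromCols, ← conjTranspose_conjTranspose A, ← conjTranspose_conjTranspose B,
    ← star_mulVec, ← star_mulVec, hAv, hBv, star_zero, star_zero, Sum.elim_zero_zero]

theorem PosSemidef.eq_zero_of_neg {A : Matrix n n 𝕜} (hA : A.PosSemidef)
    (hnA : (-A).PosSemidef) : A = 0 := by
  open scoped MatrixOrder in
  exact le_antisymm (neg_nonneg.mp (nonneg_iff_posSemidef.mpr hnA)) (nonneg_iff_posSemidef.mpr hA)

theorem PosSemidef.mul_mul_conjTranspose_eq_zero_iff [Fintype m] [Fintype n] {A : Matrix n n 𝕜}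
    (hA : A.PosSemidef) (X : Matrix m n 𝕜) : X * A * Xᴴ = 0 ↔ A * Xᴴ = 0 := by
  classical
  refine ⟨fun h ↦ ext_of_mulVec_single fun i ↦ ?_,
    fun h ↦ by rw [Matrix.mul_assoc, h, Matrix.mul_zero]⟩
  have hquad : star (Xᴴ *ᵥ Pi.single i 1) ⬝ᵥ A *ᵥ (Xᴴ *ᵥ Pi.single i 1) = 0 := by
    rw [star_mulVec, conjTranspose_conjTranspose, ← dotProduct_mulVec, mulVec_mulVec,
      mulVec_mulVec, h, zero_mulVec, dotProduct_zero]
  rw [← mulVec_mulVec, (hA.dotProduct_mulVec_zero_iff _).mp hquad, zero_mulVec]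

theorem parallelogram_law_midpoint [Fintype n] (R : Matrix n n 𝕜) {Γ₁ Γ₂ Γ : Matrix m n 𝕜}
    (hΓ : Γ = (2⁻¹ : 𝕜) • (Γ₁ + Γ₂)) :
    (2 : 𝕜) • ((Γ * R * Γᴴ - Γ₁ * R * Γ₁ᴴ) + (Γ * R * Γᴴ - Γ₂ * R * Γ₂ᴴ)) =
      -((Γ₁ - Γ₂) * R * (Γ₁ - Γ₂)ᴴ) := by
  subst hΓ
  simp only [conjTranspose_smul, conjTranspose_add, conjTranspose_sub, Matrix.sub_mul,
    Matrix.mul_sub, Matrix.add_mul, Matrix.mul_add, Matrix.smul_mul, Matrix.mul_smul,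
    smul_add, smul_sub, smul_smul, star_inv₀, star_ofNat]
  module

variable [Fintype m] [Fintype n] [DecidableEq m]

def IsLoewnerMinimizer (R : Matrix n n 𝕜) (B : Matrix n m 𝕜) (Γ₀ : Matrix m n 𝕜) : Prop :=
  Γ₀ * B = 1 ∧ ∀ Γ : Matrix m n 𝕜, Γ * B = 1 → (Γ * R * Γᴴ - Γ₀ * R * Γ₀ᴴ).PosSemidef

theorem IsLoewnerMinimizer.mul_conjTranspose_sub_eq_zero {R : Matrix n n 𝕜}
    (hR : R.PosSemidef) {B : Matrix n m 𝕜} {Γ₁ Γ₂ : Matrix m n 𝕜}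
    (h₁ : IsLoewnerMinimizer R B Γ₁) (h₂ : IsLoewnerMinimizer R B Γ₂) :
    R * (Γ₁ - Γ₂)ᴴ = 0 := by
  set Γ := (2⁻¹ : 𝕜) • (Γ₁ + Γ₂) with hΓ
  have hΓB : Γ * B = 1 := by
    rw [hΓ, Matrix.smul_mul, Matrix.add_mul, h₁.1, h₂.1, ← two_smul 𝕜, smul_smul,
      inv_mul_cancel₀ two_ne_zero, one_smul]
  rw [← hR.mul_mul_conjTranspose_eq_zero_iff]
  refine (hR.mul_mul_conjTranspose_same _).eq_zero_of_neg ?_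
  rw [← parallelogram_law_midpoint R hΓ]
  exact ((h₁.2 Γ hΓB).add (h₂.2 Γ hΓB)).smul zero_le_two

end Matrix

theorem stmt_1_general {n m : ℕ} (R : Matrix (Fin n) (Fin n) ℂ) (hR : R.PosSemidef)
    (B : Matrix (Fin n) (Fin m) ℂ)
    (Γ₁ Γ₂ : Matrix (Fin m) (Fin n) ℂ)
    (h₁B : Γ₁ * B = 1) (h₂B : Γ₂ * B = 1)
    (h₁min : ∀ Γ : Matrix (Fin m) (Fin n) ℂ, Γ * B = 1 →
      (Γ * R * Γᴴ - Γ₁ * R * Γ₁ᴴ).PosSemidef)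
    (h₂min : ∀ Γ : Matrix (Fin m) (Fin n) ℂ, Γ * B = 1 →
      (Γ * R * Γᴴ - Γ₂ * R * Γ₂ᴴ).PosSemidef)
    (hne : Γ₁ ≠ Γ₂) :
    (∃ v : Fin n → ℂ, v ≠ 0 ∧ Bᴴ *ᵥ v = 0 ∧ R *ᵥ v = 0) ∧
      (Matrix.fromCols R B).rank < n := by
  have hRΔ : R * (Γ₁ - Γ₂)ᴴ = 0 :=
    IsLoewnerMinimizer.mul_conjTranspose_sub_eq_zero hR ⟨h₁B, h₁min⟩ ⟨h₂B, h₂min⟩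
  have hBΔ : Bᴴ * (Γ₁ - Γ₂)ᴴ = 0 := by
    rw [← conjTranspose_mul, Matrix.sub_mul, h₁B, h₂B, sub_self, conjTranspose_zero]
  have hΔ : (Γ₁ - Γ₂)ᴴ ≠ 0 := by
    rw [Ne, conjTranspose_eq_zero, sub_eq_zero]
    exact hne
  obtain ⟨v, hv, hRv, hBv⟩ := exists_ne_zero_mulVec_eq_zero_of_mul_eq_zero hΔ hRΔ hBΔ
  refine ⟨⟨v, hv, hBv, hRv⟩, ?_⟩
  simpa using rank_fromCols_lt_of_conjTranspose_mulVec_eq_zero hv (by rwa [hR.isHermitian.eq]) hBv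

/-- If a Hermitian PSD matrix `R` and a full-column-rank `B` admit two distinct
Loewner-order minimizers of `Γ ↦ Γ R Γ*` subject to `Γ B = I`, then `R` and `B*`
have a common nonzero null vector; consequently `rank [R B] < n`. -/
theorem stmt_1 {n m : ℕ} (R : Matrix (Fin n) (Fin n) ℂ) (hR : R.PosSemidef)
    (B : Matrix (Fin n) (Fin m) ℂ) (hB : B.rank = m)
    (Γ₁ Γ₂ : Matrix (Fin m) (Fin n) ℂ)
    (h₁B : Γ₁ * B = 1) (h₂B : Γ₂ * B = 1)
    (h₁min : ∀ Γ : Matrix (Fin m) (Fin n) ℂ, Γ * B = 1 →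
      (Γ * R * Γᴴ - Γ₁ * R * Γ₁ᴴ).PosSemidef)
    (h₂min : ∀ Γ : Matrix (Fin m) (Fin n) ℂ, Γ * B = 1 →
      (Γ * R * Γᴴ - Γ₂ * R * Γ₂ᴴ).PosSemidef)
    (hne : Γ₁ ≠ Γ₂) :
    (∃ v : Fin n → ℂ, v ≠ 0 ∧ Bᴴ *ᵥ v = 0 ∧ R *ᵥ v = 0) ∧
      (Matrix.fromCols R B).rank < n :=
  stmt_1_general R hR B Γ₁ Γ₂ h₁B h₂B h₁min h₂min hne
end

section
/- Let R be an n×n Hermitian positive semidefinite matrix and B ∈ ℂ^{n×m} of rank m. There exists Γ ∈ ℂ^{m×n} with Γ B = I_m and Γ R Γ* = 0 if and only if the m×m matrix B* P B is invertible, where P denotes the orthogonal projection onto the null space of R. -/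
/-!
If `Γ B = 1` and `Γ R Γᴴ = 0`, positivity of `R` gives `R Γᴴ = 0`, so `P` fixes the columns of
`Γᴴ` and `Γ P = Γ`. Then `Γ` is a left inverse of `P B`, and `Bᴴ P B = (P B)ᴴ (P B)` is positive
definite. Conversely, `Γ := (Bᴴ P B)⁻¹ Bᴴ P` works because `P R = 0`.
-/

open Matrix ComplexOrder

namespace Matrix

theorem PosSemidef.mul_mul_conjTranspose_eq_zero_iff_s2 {𝕜 m n : Type*} [RCLike 𝕜] [Fintype m]
    [Fintype n] {R : Matrix n n 𝕜} (hR : R.PosSemidef) (Γ : Matrix m n 𝕜) :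
    Γ * R * Γᴴ = 0 ↔ R * Γᴴ = 0 := by
  refine ⟨fun h => ?_, fun h => by rw [Matrix.mul_assoc, h, Matrix.mul_zero]⟩
  rw [ext_iff_mulVec]
  intro v
  have hquad : star (Γᴴ *ᵥ v) ⬝ᵥ R *ᵥ (Γᴴ *ᵥ v) = star v ⬝ᵥ (Γ * R * Γᴴ) *ᵥ v := by
    rw [star_mulVec, conjTranspose_conjTranspose, ← dotProduct_mulVec, mulVec_mulVec,
      mulVec_mulVec, Matrix.mul_assoc]
  rw [← mulVec_mulVec, zero_mulVec, ← hR.dotProduct_mulVec_zero_iff, hquad, h, zero_mulVec,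
    dotProduct_zero]

theorem mul_eq_zero_iff_mul_eq_self_of_mulVec_eq_zero_iff {α n p : Type*} [CommRing α]
    [Fintype n] [Fintype p] {R P : Matrix n n α} (hRP : ∀ x, R *ᵥ x = 0 ↔ P *ᵥ x = x)
    (A : Matrix n p α) : R * A = 0 ↔ P * A = A := by
  simp only [ext_iff_mulVec, ← mulVec_mulVec, zero_mulVec, hRP]

theorem conjTranspose_mul_mul_eq_of_isHermitian_of_mul_self {α m n : Type*} [Ring α]
    [StarRing α] [Fintype n] {P : Matrix n n α} (hPh : P.IsHermitian) (hPP : P * P = P)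
    (B : Matrix n m α) : Bᴴ * P * B = (P * B)ᴴ * (P * B) := by
  rw [conjTranspose_mul, hPh.eq, ← Matrix.mul_assoc, Matrix.mul_assoc Bᴴ P P, hPP]

theorem isUnit_conjTranspose_mul_self_of_mul_eq_one {K m n : Type*} [Field K] [PartialOrder K]
    [StarRing K] [StarOrderedRing K] [Fintype m] [DecidableEq m] [Fintype n]
    {A : Matrix n m K} {Γ : Matrix m n K} (h : Γ * A = 1) : IsUnit (Aᴴ * A) := by
  refine (PosDef.conjTranspose_mul_self A fun x y hxy => ?_).isUnit
  simpa only [mulVec_mulVec, h, one_mulVec] using congrArg (Γ *ᵥ ·) hxy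

end Matrix

theorem stmt_2_general {n m : ℕ} (R : Matrix (Fin n) (Fin n) ℂ) (hR : R.PosSemidef)
    (B : Matrix (Fin n) (Fin m) ℂ)
    (P : Matrix (Fin n) (Fin n) ℂ) (hPh : P.IsHermitian) (hPP : P * P = P)
    (hPrange : ∀ x : Fin n → ℂ, R *ᵥ x = 0 ↔ P *ᵥ x = x) :
    (∃ Γ : Matrix (Fin m) (Fin n) ℂ, Γ * B = 1 ∧ Γ * R * Γᴴ = 0) ↔
      IsUnit (Bᴴ * P * B) := by
  constructor
  · rintro ⟨Γ, hΓB, hΓR⟩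
    have hPΓ : P * Γᴴ = Γᴴ :=
      (mul_eq_zero_iff_mul_eq_self_of_mulVec_eq_zero_iff hPrange _).mp
        ((hR.mul_mul_conjTranspose_eq_zero_iff_s2 Γ).mp hΓR)
    have hΓP : Γ * P = Γ := by
      simpa only [conjTranspose_mul, hPh.eq, conjTranspose_conjTranspose]
        using congrArg conjTranspose hPΓ
    rw [conjTranspose_mul_mul_eq_of_isHermitian_of_mul_self hPh hPP]
    exact isUnit_conjTranspose_mul_self_of_mul_eq_one (Γ := Γ)
      (by rw [← Matrix.mul_assoc, hΓP, hΓB])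
  · intro hM
    have hRP : R * P = 0 := (mul_eq_zero_iff_mul_eq_self_of_mulVec_eq_zero_iff hPrange P).mpr hPP
    have hPR : P * R = 0 := by
      simpa only [conjTranspose_mul, hPh.eq, hR.isHermitian.eq, conjTranspose_zero]
        using congrArg conjTranspose hRP
    refine ⟨(Bᴴ * P * B)⁻¹ * Bᴴ * P, ?_, ?_⟩
    · rw [Matrix.mul_assoc, Matrix.mul_assoc, ← Matrix.mul_assoc Bᴴ,
        nonsing_inv_mul _ ((isUnit_iff_isUnit_det _).mp hM)]
    · rw [Matrix.mul_assoc _ P R, hPR, Matrix.mul_zero, Matrix.zero_mul]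

/-- There exists `Γ` with `Γ B = I` and `Γ R Γ* = 0` iff `B* Π_{N(R)} B` is
invertible, where `P` is the orthogonal projection onto the null space of `R`. -/
theorem stmt_2 {n m : ℕ} (R : Matrix (Fin n) (Fin n) ℂ) (hR : R.PosSemidef)
    (B : Matrix (Fin n) (Fin m) ℂ) (hB : B.rank = m)
    (P : Matrix (Fin n) (Fin n) ℂ) (hPh : P.IsHermitian) (hPP : P * P = P)
    (hPrange : ∀ x : Fin n → ℂ, R *ᵥ x = 0 ↔ P *ᵥ x = x) :
    (∃ Γ : Matrix (Fin m) (Fin n) ℂ, Γ * B = 1 ∧ Γ * R * Γᴴ = 0) ↔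
      IsUnit (Bᴴ * P * B) :=
  stmt_2_general R hR B P hPh hPP hPrange
end

section
/- Let R ∈ ℂ^{n×n} be Hermitian positive semidefinite and B ∈ ℂ^{n×m} of rank m. Let N(R) denote the null space of R and R(B) the column space of B. Then B* Π_{N(R)} B is invertible if and only if the directed gap δ(R(B), N(R)) := ‖ Π_{N(R)^⊥} restricted to R(B) ‖ is strictly less than 1. -/
/-! Since `P` is a Hermitian idempotent, `Bᴴ * P * B = (P * B)ᴴ * (P * B)`, which is invertible
iff `P * B` is injective. By Pythagoras, `‖(1 - P) y‖² + ‖P y‖² = ‖y‖²`, so `P (B v) ≠ 0` iff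
`‖(1 - P) (B v)‖ < ‖B v‖`. As `B` is injective, compactness of the unit sphere turns this strict
pointwise inequality into a uniform constant `c < 1`. -/

open Matrix ComplexOrder Function Metric

theorem LinearMap.exists_lt_one_norm_le_mul_iff {𝕜 E F G : Type*} [RCLike 𝕜]
    [NormedAddCommGroup E] [NormedSpace 𝕜 E] [FiniteDimensional 𝕜 E]
    [NormedAddCommGroup F] [NormedSpace 𝕜 F] [NormedAddCommGroup G] [NormedSpace 𝕜 G]
    (f : E →ₗ[𝕜] F) {g : E →ₗ[𝕜] G} (hg : Injective g) :
    (∃ c < 1, ∀ v, ‖f v‖ ≤ c * ‖g v‖) ↔ ∀ v ≠ 0, ‖f v‖ < ‖g v‖ := by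
  have hg₀ {v : E} (hv : v ≠ 0) : 0 < ‖g v‖ := norm_pos_iff.2 ((map_ne_zero_iff g hg).2 hv)
  constructor
  · rintro ⟨c, hc, hfg⟩ v hv
    calc ‖f v‖ ≤ c * ‖g v‖ := hfg v
      _ < ‖g v‖ := by nlinarith [hg₀ hv]
  intro hfg
  rcases subsingleton_or_nontrivial E with hE | hE
  · exact ⟨0, zero_lt_one, fun v => by simp [Subsingleton.elim v 0]⟩
  have := FiniteDimensional.proper_rclike 𝕜 E
  have hS {v : E} (hv : v ∈ sphere 0 1) : v ≠ 0 := ne_zero_of_mem_unit_sphere ⟨v, hv⟩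
  obtain ⟨v₀, hv₀, hmax⟩ := (isCompact_sphere (0 : E) 1).exists_isMaxOn
    (Set.nonempty_coe_sort.1 (NormedSpace.sphere_nonempty_rclike 𝕜 zero_le_one))
    (f.continuous_of_finiteDimensional.norm.continuousOn.div
      g.continuous_of_finiteDimensional.norm.continuousOn fun v hv => (hg₀ (hS hv)).ne')
  refine ⟨‖f v₀‖ / ‖g v₀‖, (div_lt_one (hg₀ (hS hv₀))).2 (hfg v₀ (hS hv₀)), fun v => ?_⟩
  obtain rfl | hv := eq_or_ne v 0
  · simp
  have hscaled : ‖f ((‖v‖⁻¹ : 𝕜) • v)‖ / ‖g ((‖v‖⁻¹ : 𝕜) • v)‖ ≤ ‖f v₀‖ / ‖g v₀‖ :=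
    hmax (mem_sphere_zero_iff_norm.2 (norm_smul_inv_norm hv))
  rw [map_smul, map_smul, norm_smul, norm_smul,
    mul_div_mul_left _ _ (by simpa using hv), div_le_iff₀ (hg₀ hv)] at hscaled
  exact hscaled

theorem LinearMap.IsSymmetricProjection.norm_sub_apply_lt_iff {𝕜 E : Type*} [RCLike 𝕜]
    [NormedAddCommGroup E] [InnerProductSpace 𝕜 E] {p : E →ₗ[𝕜] E}
    (hp : p.IsSymmetricProjection) (x : E) : ‖x - p x‖ < ‖x‖ ↔ p x ≠ 0 := by
  obtain ⟨K, _, rfl⟩ := isSymmetricProjection_iff_eq_coe_starProjection.mp hp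
  have hpyth := K.norm_sq_eq_add_norm_sq_starProjection x
  rw [K.starProjection_orthogonal_val] at hpyth
  rw [← sq_lt_sq₀ (norm_nonneg _) (norm_nonneg _), ContinuousLinearMap.coe_coe, hpyth,
    lt_add_iff_pos_left, sq_pos_iff, norm_ne_zero_iff]

theorem Matrix.isUnit_conjTranspose_mul_self_iff {m n R : Type*} [Fintype m] [Fintype n]
    [DecidableEq n] [Field R] [PartialOrder R] [StarRing R] [StarOrderedRing R]
    (A : Matrix m n R) : IsUnit (Aᴴ * A) ↔ Injective A.mulVec := by
  rw [← mulVec_injective_iff_isUnit, ← coe_mulVecLin, ← coe_mulVecLin, injective_iff_map_eq_zero,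
    injective_iff_map_eq_zero]
  simp only [mulVecLin_apply, conjTranspose_mul_self_mulVec_eq_zero]

theorem Matrix.mulVec_injective_of_rank_eq {m n K : Type*} [Fintype m] [Fintype n] [Field K]
    {A : Matrix m n K} (hA : A.rank = Fintype.card n) : Injective A.mulVec := by
  rw [mulVec_injective_iff, linearIndependent_iff_card_eq_finrank_span, Set.finrank,
    ← rank_eq_finrank_span_cols, hA]

theorem Matrix.injective_toEuclideanLin_iff {𝕜 m n : Type*} [RCLike 𝕜] [Fintype n] [DecidableEq n]
    (A : Matrix m n 𝕜) : Injective (toEuclideanLin A) ↔ Injective A.mulVec := by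
  change Injective ((WithLp.equiv 2 _).symm ∘ A.mulVec ∘ WithLp.equiv 2 _) ↔ _
  rw [EquivLike.comp_injective, EquivLike.injective_comp]

theorem Matrix.isSymmetricProjection_toEuclideanLin {𝕜 n : Type*} [RCLike 𝕜] [Fintype n]
    [DecidableEq n] {P : Matrix n n 𝕜} (hP : P.IsHermitian) (hPP : IsIdempotentElem P) :
    (toEuclideanLin P).IsSymmetricProjection :=
  ⟨hPP.map (toLpLinAlgEquiv 2), isSymmetric_toEuclideanLin_iff.2 hP⟩

theorem stmt_5_general {n m : ℕ}
    (B : Matrix (Fin n) (Fin m) ℂ) (hB : B.rank = m)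
    (P : Matrix (Fin n) (Fin n) ℂ) (hPh : P.IsHermitian) (hPP : P * P = P) :
    IsUnit (Bᴴ * P * B) ↔
      ∃ c : ℝ, c < 1 ∧ ∀ v : EuclideanSpace ℂ (Fin m),
        ‖Matrix.toEuclideanLin (1 - P) (Matrix.toEuclideanLin B v)‖ ≤
          c * ‖Matrix.toEuclideanLin B v‖ := by
  have hp := isSymmetricProjection_toEuclideanLin hPh hPP
  have hb : Injective (toEuclideanLin B) :=
    (injective_toEuclideanLin_iff B).2 (mulVec_injective_of_rank_eq (by simpa using hB))
  have hBPB : Bᴴ * P * B = (P * B)ᴴ * (P * B) := by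
    rw [conjTranspose_mul, hPh.eq, Matrix.mul_assoc Bᴴ P (P * B), ← Matrix.mul_assoc P P B, hPP,
      Matrix.mul_assoc]
  rw [hBPB, isUnit_conjTranspose_mul_self_iff, ← injective_toEuclideanLin_iff,
    injective_iff_map_eq_zero, map_sub, toLpLin_one]
  refine Iff.trans ?_ (LinearMap.exists_lt_one_norm_le_mul_iff
    ((LinearMap.id - toEuclideanLin P) ∘ₗ toEuclideanLin B) hb).symm
  refine forall_congr' fun v => ?_
  rw [LinearMap.comp_apply, LinearMap.sub_apply, LinearMap.id_apply, hp.norm_sub_apply_lt_iff,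
    not_imp_not, toLpLin_mul_same, LinearMap.comp_apply]

/-- `B* Π_{N(R)} B` is invertible iff the directed gap
`δ(R(B), N(R)) = ‖Π_{N(R)^⊥}|_{R(B)}‖ < 1`, expressed here as the existence of a
contraction constant `c < 1` bounding `‖(I - P) y‖ ≤ c ‖y‖` for all `y` in the
range of `B` (Euclidean norms). -/
theorem stmt_5 {n m : ℕ} (R : Matrix (Fin n) (Fin n) ℂ) (hR : R.PosSemidef)
    (B : Matrix (Fin n) (Fin m) ℂ) (hB : B.rank = m)
    (P : Matrix (Fin n) (Fin n) ℂ) (hPh : P.IsHermitian) (hPP : P * P = P)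
    (hPrange : ∀ x : Fin n → ℂ, R *ᵥ x = 0 ↔ P *ᵥ x = x) :
    IsUnit (Bᴴ * P * B) ↔
      ∃ c : ℝ, c < 1 ∧ ∀ v : EuclideanSpace ℂ (Fin m),
        ‖Matrix.toEuclideanLin (1 - P) (Matrix.toEuclideanLin B v)‖ ≤
          c * ‖Matrix.toEuclideanLin B v‖ :=
  stmt_5_general B hB P hPh hPP
end

section
/- Let A ∈ ℂ^{n×n}, B ∈ ℂ^{n×m}, R ∈ ℂ^{n×n} Hermitian positive semidefinite with (A,B) a reachable (controllable) pair, and suppose R = B Ω B* + A₀ R A₀*, where Ω ∈ ℂ^{m×m} is Hermitian positive definite, A₀ = (I - BΓ)A for some Γ ∈ ℂ^{m×n} with Γ B = I_m, and all eigenvalues of A₀ have modulus strictly less than 1. Then R is positive definite. -/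
/-!
If `R x = 0`, the Stein equation splits `x* R x = 0` into the two nonnegative terms
`(B* x)* Ω (B* x)` and `(A₀* x)* R (A₀* x)`, so `B* x = 0` and `R A₀* x = 0`; and once `B* x = 0`,
the feedback term disappears: `A₀* x = A* x`. Hence `ker R` is an `A*`-invariant subspace of
`ker B*`, so it is orthogonal to every column of every `Aᵏ B`, and reachability makes it zero.
-/

open Matrix ComplexOrder

namespace Matrix

variable {K : Type*} [Field K] {ι κ : Type*} [Fintype ι] [Fintype κ]

theorem linearIndependent_row_of_rank_eq_card {M : Matrix ι κ K}
    (h : M.rank = Fintype.card ι) : LinearIndependent K M.row := by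
  rw [linearIndependent_iff_card_eq_finrank_span, Set.finrank, ← rank_eq_finrank_span_row, h]

theorem vecMul_injective_of_rank_eq_card {M : Matrix ι κ K}
    (h : M.rank = Fintype.card ι) : Function.Injective M.vecMul :=
  vecMul_injective_iff.mpr (linearIndependent_row_of_rank_eq_card h)

theorem PosSemidef.posDef_of_mulVec_eq_zero_imp {𝕜 : Type*} [RCLike 𝕜] {R : Matrix ι ι 𝕜}
    (hR : R.PosSemidef) (hker : ∀ x, R *ᵥ x = 0 → x = 0) : R.PosDef :=
  .of_dotProduct_mulVec_pos hR.isHermitian fun x hx =>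
    (hR.dotProduct_mulVec_nonneg x).lt_of_ne' fun h =>
      hx (hker x ((hR.dotProduct_mulVec_zero_iff x).mp h))

theorem conjTranspose_one_sub_mul_mul_mulVec {R : Type*} [CommRing R] [StarRing R]
    [DecidableEq ι] (A : Matrix ι ι R) (B : Matrix ι κ R) (Γ : Matrix κ ι R) {y : ι → R}
    (hy : Bᴴ *ᵥ y = 0) : ((1 - B * Γ) * A)ᴴ *ᵥ y = Aᴴ *ᵥ y := by
  rw [conjTranspose_mul, ← mulVec_mulVec, conjTranspose_sub, conjTranspose_one, sub_mulVec,
    conjTranspose_mul, ← mulVec_mulVec, hy, mulVec_zero, one_mulVec, sub_zero]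

end Matrix

def reachabilityMatrix {R : Type*} [Semiring R] {n : ℕ} {ι : Type*}
    (A : Matrix (Fin n) (Fin n) R) (B : Matrix (Fin n) ι R) : Matrix (Fin n) (Fin n × ι) R :=
  Matrix.of fun i p => (A ^ (p.1 : ℕ) * B) i p.2

theorem eq_zero_of_mem_of_conjTranspose_invariant {K : Type*} [Field K] [StarRing K] {n : ℕ}
    {ι : Type*} [Fintype ι] {A : Matrix (Fin n) (Fin n) K} {B : Matrix (Fin n) ι K}
    (hreach : (reachabilityMatrix A B).rank = n) {S : Set (Fin n → K)}
    (hB : ∀ y ∈ S, Bᴴ *ᵥ y = 0) (hA : ∀ y ∈ S, Aᴴ *ᵥ y ∈ S) {x : Fin n → K} (hx : x ∈ S) :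
    x = 0 := by
  have hpow : ∀ k : ℕ, Aᴴ ^ k *ᵥ x ∈ S := by
    intro k
    induction k with
    | zero => simpa using hx
    | succ k ih => simpa [pow_succ', ← mulVec_mulVec] using hA _ ih
  have hrow : ∀ k : ℕ, star x ᵥ* (A ^ k * B) = 0 := by
    intro k
    rw [← conjTranspose_conjTranspose (A ^ k * B), ← star_mulVec, conjTranspose_mul,
      conjTranspose_pow, ← mulVec_mulVec, hB _ (hpow k), star_zero]
  have horth : star x ᵥ* reachabilityMatrix A B = 0 := by
    ext ⟨k, j⟩
    simpa [vecMul, dotProduct, reachabilityMatrix] using congrFun (hrow k) j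
  refine star_eq_zero.mp (vecMul_injective_of_rank_eq_card (M := reachabilityMatrix A B) ?_ ?_)
  · rw [hreach, Fintype.card_fin]
  · exact horth.trans (zero_vecMul _).symm

theorem mulVec_eq_zero_of_stein {𝕜 : Type*} [RCLike 𝕜] {ι κ : Type*} [Fintype ι] [Fintype κ]
    {R A₀ : Matrix ι ι 𝕜} {B : Matrix ι κ 𝕜} {Ω : Matrix κ κ 𝕜} (hR : R.PosSemidef)
    (hΩ : Ω.PosDef) (hstein : R = B * Ω * Bᴴ + A₀ * R * A₀ᴴ) {y : ι → 𝕜} (hy : R *ᵥ y = 0) :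
    Bᴴ *ᵥ y = 0 ∧ R *ᵥ (A₀ᴴ *ᵥ y) = 0 := by
  have hsplit : star y ⬝ᵥ R *ᵥ y = star (Bᴴ *ᵥ y) ⬝ᵥ Ω *ᵥ (Bᴴ *ᵥ y)
      + star (A₀ᴴ *ᵥ y) ⬝ᵥ R *ᵥ (A₀ᴴ *ᵥ y) := by
    conv_lhs => rw [hstein]
    simp only [add_mulVec, dotProduct_add, ← mulVec_mulVec, star_mulVec, dotProduct_mulVec,
      conjTranspose_conjTranspose]
  rw [hy, dotProduct_zero, eq_comm, add_eq_zero_iff_of_nonneg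
    (hΩ.posSemidef.dotProduct_mulVec_nonneg _) (hR.dotProduct_mulVec_nonneg _),
    hR.dotProduct_mulVec_zero_iff] at hsplit
  refine ⟨?_, hsplit.2⟩
  by_contra hne
  exact (hΩ.dotProduct_mulVec_pos hne).ne' hsplit.1

theorem stmt_8_general {n m : ℕ} (A : Matrix (Fin n) (Fin n) ℂ)
    (B : Matrix (Fin n) (Fin m) ℂ)
    (hreach : (Matrix.of fun (i : Fin n) (p : Fin n × Fin m) =>
        (A ^ (p.1 : ℕ) * B) i p.2).rank = n)
    (R : Matrix (Fin n) (Fin n) ℂ) (hR : R.PosSemidef)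
    (Ω : Matrix (Fin m) (Fin m) ℂ) (hΩ : Ω.PosDef)
    (Γ : Matrix (Fin m) (Fin n) ℂ)
    (A₀ : Matrix (Fin n) (Fin n) ℂ) (hA₀ : A₀ = (1 - B * Γ) * A)
    (hstein : R = B * Ω * Bᴴ + A₀ * R * A₀ᴴ) :
    R.PosDef := by
  refine hR.posDef_of_mulVec_eq_zero_imp fun x hx => ?_
  refine eq_zero_of_mem_of_conjTranspose_invariant (S := {y | R *ᵥ y = 0}) hreach
    (fun y hy => (mulVec_eq_zero_of_stein hR hΩ hstein hy).1) (fun y hy => ?_) hx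
  obtain ⟨hBy, hA₀y⟩ := mulVec_eq_zero_of_stein hR hΩ hstein hy
  rwa [hA₀, conjTranspose_one_sub_mul_mul_mulVec A B Γ hBy] at hA₀y

/-- If `(A,B)` is reachable, `Ω > 0`, `Γ B = I`, `A₀ = (I - BΓ)A` has spectrum
in the open unit disc, and the PSD matrix `R` satisfies the Stein equation
`R = B Ω B* + A₀ R A₀*`, then `R` is positive definite. -/
theorem stmt_8 {n m : ℕ} (A : Matrix (Fin n) (Fin n) ℂ)
    (B : Matrix (Fin n) (Fin m) ℂ)
    (hreach : (Matrix.of fun (i : Fin n) (p : Fin n × Fin m) =>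
        (A ^ (p.1 : ℕ) * B) i p.2).rank = n)
    (R : Matrix (Fin n) (Fin n) ℂ) (hR : R.PosSemidef)
    (Ω : Matrix (Fin m) (Fin m) ℂ) (hΩ : Ω.PosDef)
    (Γ : Matrix (Fin m) (Fin n) ℂ) (hΓB : Γ * B = 1)
    (A₀ : Matrix (Fin n) (Fin n) ℂ) (hA₀ : A₀ = (1 - B * Γ) * A)
    (hstab : ∀ μ : ℂ, μ ∈ spectrum ℂ A₀ → ‖μ‖ < 1)
    (hstein : R = B * Ω * Bᴴ + A₀ * R * A₀ᴴ) :
    R.PosDef :=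
  stmt_8_general A B hreach R hR Ω hΩ Γ A₀ hA₀ hstein
end

section
/- Let A ∈ ℂ^{n×n} and B ∈ ℂ^{n×1} (the scalar-input case m = 1), with (A,B) a reachable pair. Let R ∈ ℂ^{n×n} be Hermitian, positive semidefinite, singular, and suppose R - A R A* = B H + H* B* for some H ∈ ℂ^{1×n}. Then B* Π_{N(R)} B is invertible (i.e., Π_{N(R)} B ≠ 0). -/
open Matrix ComplexOrder

/-- Scalar-input case `m = 1`: for a reachable pair `(A,B)` and a singular
Hermitian PSD state covariance `R` (satisfying `R - A R A* = B H + H* B*`),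
the scalar `B* Π_{N(R)} B` is invertible. -/
theorem stmt_9 {n : ℕ} (A : Matrix (Fin n) (Fin n) ℂ)
    (B : Matrix (Fin n) (Fin 1) ℂ)
    (hreach : (Matrix.of fun (i : Fin n) (p : Fin n × Fin 1) =>
        (A ^ (p.1 : ℕ) * B) i p.2).rank = n)
    (R : Matrix (Fin n) (Fin n) ℂ) (hR : R.PosSemidef) (hsing : R.det = 0)
    (H : Matrix (Fin 1) (Fin n) ℂ)
    (hstein : R - A * R * Aᴴ = B * H + Hᴴ * Bᴴ)
    (P : Matrix (Fin n) (Fin n) ℂ) (hPh : P.IsHermitian) (hPP : P * P = P)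
    (hPrange : ∀ x : Fin n → ℂ, R *ᵥ x = 0 ↔ P *ᵥ x = x) :
    IsUnit (Bᴴ * P * B) := by
  by_contra hunit
  -- The 1×1 matrix `Bᴴ * P * B` is not a unit, hence zero.
  have h0 : Bᴴ * P * B = 0 := by
    by_contra hne
    apply hunit
    rw [Matrix.isUnit_iff_isUnit_det, Matrix.det_fin_one, isUnit_iff_ne_zero]
    intro hz
    apply hne
    ext i j
    rw [Subsingleton.elim i 0, Subsingleton.elim j 0, hz]
    rfl
  -- Hence P * B = 0.
  have hPB : P * B = 0 := by
    have : (P * B)ᴴ * (P * B) = 0 := by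
      calc (P * B)ᴴ * (P * B) = Bᴴ * (P * (P * B)) := by
            rw [conjTranspose_mul, hPh.eq, Matrix.mul_assoc]
        _ = Bᴴ * (P * B) := by rw [← Matrix.mul_assoc P P B, hPP]
        _ = 0 := by rw [← Matrix.mul_assoc, h0]
    exact Matrix.conjTranspose_mul_self_eq_zero.mp this
  have hBP : Bᴴ * P = 0 := by
    have := congrArg conjTranspose hPB
    rwa [conjTranspose_mul, hPh.eq, conjTranspose_zero] at this
  -- Null vectors of R are killed by Bᴴ.
  have hBnull : ∀ x : Fin n → ℂ, R *ᵥ x = 0 → Bᴴ *ᵥ x = 0 := by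
    intro x hx
    have hPx := (hPrange x).mp hx
    calc Bᴴ *ᵥ x = Bᴴ *ᵥ (P *ᵥ x) := by rw [hPx]
      _ = (Bᴴ * P) *ᵥ x := by rw [mulVec_mulVec]
      _ = 0 := by rw [hBP, zero_mulVec]
  -- The null space of R is Aᴴ-invariant.
  have hAinv : ∀ x : Fin n → ℂ, R *ᵥ x = 0 → R *ᵥ (Aᴴ *ᵥ x) = 0 := by
    intro x hx
    apply (hR.dotProduct_mulVec_zero_iff (Aᴴ *ᵥ x)).mp
    have hARA : A * R * Aᴴ = R - (B * H + Hᴴ * Bᴴ) := by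
      rw [← hstein, sub_sub_cancel]
    have hBx : Bᴴ *ᵥ x = 0 := hBnull x hx
    calc star (Aᴴ *ᵥ x) ⬝ᵥ R *ᵥ (Aᴴ *ᵥ x)
        = (star x ᵥ* A) ⬝ᵥ ((R * Aᴴ) *ᵥ x) := by
          rw [star_mulVec, conjTranspose_conjTranspose, mulVec_mulVec]
      _ = star x ⬝ᵥ (A *ᵥ ((R * Aᴴ) *ᵥ x)) := (dotProduct_mulVec _ _ _).symm
      _ = star x ⬝ᵥ ((A * R * Aᴴ) *ᵥ x) := by
          rw [mulVec_mulVec, Matrix.mul_assoc]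
      _ = star x ⬝ᵥ (R *ᵥ x - (B * H) *ᵥ x - (Hᴴ * Bᴴ) *ᵥ x) := by
          rw [hARA]
          congr 1
          rw [sub_mulVec, add_mulVec]
          ring
      _ = star x ⬝ᵥ (-(B *ᵥ (H *ᵥ x))) := by
          rw [hx, ← mulVec_mulVec, ← mulVec_mulVec, hBx, mulVec_zero]
          congr 1
          ring
      _ = -(star x ⬝ᵥ (B *ᵥ (H *ᵥ x))) := by rw [dotProduct_neg]
      _ = -((star x ᵥ* B) ⬝ᵥ (H *ᵥ x)) := by rw [dotProduct_mulVec]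
      _ = 0 := by
          have : star x ᵥ* B = 0 := by
            have := congrArg star hBx
            rwa [star_mulVec, conjTranspose_conjTranspose, star_zero] at this
          rw [this, zero_dotProduct, neg_zero]
  -- R is singular: take a nonzero null vector v.
  obtain ⟨v, hv0, hv⟩ := (Matrix.exists_mulVec_eq_zero_iff).mpr hsing
  -- All iterates (Aᴴ)^k v are in the null space of R.
  have hiter : ∀ k : ℕ, R *ᵥ ((Aᴴ) ^ k *ᵥ v) = 0 := by
    intro k
    induction k with
    | zero => simpa using hv
    | succ k ih =>
      have : (Aᴴ) ^ (k + 1) *ᵥ v = Aᴴ *ᵥ ((Aᴴ) ^ k *ᵥ v) := by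
        rw [mulVec_mulVec, pow_succ']
      rw [this]
      exact hAinv _ ih
  -- Hence Bᴴ (Aᴴ)^k v = 0 for all k.
  have hBiter : ∀ k : ℕ, Bᴴ *ᵥ ((Aᴴ) ^ k *ᵥ v) = 0 := fun k => hBnull _ (hiter k)
  -- Set C to be the reachability matrix; then Cᴴ v = 0.
  set C : Matrix (Fin n) (Fin n × Fin 1) ℂ :=
    Matrix.of fun (i : Fin n) (p : Fin n × Fin 1) => (A ^ (p.1 : ℕ) * B) i p.2 with hC
  have hCv : Cᴴ *ᵥ v = 0 := by
    ext p
    obtain ⟨k, j⟩ := p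
    have : (Bᴴ * (Aᴴ) ^ (k : ℕ)) *ᵥ v = 0 := by
      rw [← mulVec_mulVec]; exact hBiter k
    have hentry := congrFun this j
    have heq : (Bᴴ * (Aᴴ) ^ (k : ℕ)) = (A ^ (k : ℕ) * B)ᴴ := by
      rw [conjTranspose_mul, ← conjTranspose_pow]
    rw [heq] at hentry
    simpa [mulVec, dotProduct, conjTranspose_apply, hC] using hentry
  -- But rank Cᴴ = n, so its kernel is trivial: contradiction with v ≠ 0.
  have hrank : Cᴴ.rank = n := by rw [Matrix.rank_conjTranspose]; exact hreach
  have hker : LinearMap.ker Cᴴ.mulVecLin = ⊥ := by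
    have hrn := Cᴴ.mulVecLin.finrank_range_add_finrank_ker
    rw [show Module.finrank ℂ (Fin n → ℂ) = n by simp] at hrn
    have : Module.finrank ℂ (LinearMap.range Cᴴ.mulVecLin) = n := hrank
    have hk0 : Module.finrank ℂ (LinearMap.ker Cᴴ.mulVecLin) = 0 := by omega
    exact Submodule.finrank_eq_zero.mp hk0
  have : v ∈ LinearMap.ker Cᴴ.mulVecLin := by
    simpa [Matrix.mulVecLin_apply] using hCv
  rw [hker] at this
  exact hv0 (by simpa using this)
end

section
/- Let A ∈ ℂ^{n×n}, B ∈ ℂ^{n×1}, m = 1, (A,B) reachable, R Hermitian PSD with R - A R A* = B H + H* B* for some H ∈ ℂ^{1×n}, and suppose Π_{N(R)} B = 0 (equivalently, the range of B is contained in the range of R). Then for every ℓ ≥ 0, Π_{N(R)} A^ℓ R = 0; consequently the range of R is A-invariant and contains R(A^ℓ B) for all ℓ. -/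
open Matrix ComplexOrder

/-!
Let `P` be the orthogonal projection onto `ker R`. Since `P R = R P = 0`, the matrix `R + P` is
invertible and `R (R + P)⁻¹ = 1 - P`, so every matrix killed by `P` factors through `R`.
Compressing the Stein equation by `P` and using `P B = 0` gives `(P A) R (P A)ᴴ = 0`, hence
`P A R = 0` because `R ⪰ 0`. Inductively, `P Aˡ R = 0` says the columns of `Aˡ R` lie in the
range of `R`, and applying `A` to them stays there because `P A R = 0`.
-/

namespace Matrix

variable {m n : Type*} [Fintype n]

theorem PosSemidef.mul_eq_zero_of_mul_mul_conjTranspose_eq_zero {𝕜 : Type*} [RCLike 𝕜]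
    {R : Matrix n n 𝕜} (hR : R.PosSemidef) {X : Matrix m n 𝕜} (h : X * R * Xᴴ = 0) :
    X * R = 0 := by
  classical
  open scoped MatrixOrder in
  obtain ⟨S, rfl⟩ := CStarAlgebra.nonneg_iff_eq_star_mul_self.mp hR.nonneg
  rw [star_eq_conjTranspose] at h ⊢
  have hXS : X * Sᴴ = 0 := by
    rw [← self_mul_conjTranspose_eq_zero, conjTranspose_mul, conjTranspose_conjTranspose, ← h]
    simp only [Matrix.mul_assoc]
  rw [← Matrix.mul_assoc, hXS, Matrix.zero_mul]

theorem mul_mul_mul_conjTranspose_eq_zero_of_stein [Fintype m] {𝕜 : Type*} [RCLike 𝕜]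
    {A R P : Matrix n n 𝕜} {B : Matrix n m 𝕜} {H : Matrix m n 𝕜}
    (hstein : R - A * R * Aᴴ = B * H + Hᴴ * Bᴴ) (hPh : P.IsHermitian) (hPR : P * R = 0)
    (hPB : P * B = 0) : P * A * R * (P * A)ᴴ = 0 := by
  have hBP : Bᴴ * P = 0 := by rw [← hPh.eq, ← conjTranspose_mul, hPB, conjTranspose_zero]
  have hARA : A * R * Aᴴ = R - (B * H + Hᴴ * Bᴴ) := by rw [← hstein, sub_sub_cancel]
  calc P * A * R * (P * A)ᴴ = P * (A * R * Aᴴ) * P := by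
        simp only [conjTranspose_mul, hPh.eq, Matrix.mul_assoc]
    _ = P * R * P - (P * B * H * P + P * Hᴴ * (Bᴴ * P)) := by
        simp only [hARA, Matrix.mul_sub, Matrix.sub_mul, Matrix.mul_add, Matrix.add_mul,
          Matrix.mul_assoc]
    _ = 0 := by simp [hPR, hPB, hBP]

variable [DecidableEq n] {K : Type*} [Field K] {R P : Matrix n n K}

theorem mul_eq_zero_of_mulVec_eq_self (hPP : P * P = P)
    (hker : ∀ x, P *ᵥ x = x → R *ᵥ x = 0) : R * P = 0 := by
  refine ext_of_mulVec_single fun j => ?_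
  rw [← mulVec_mulVec, zero_mulVec]
  exact hker _ (by rw [mulVec_mulVec, hPP])

theorem isUnit_add_of_mul_eq_zero (hPR : P * R = 0) (hPP : P * P = P)
    (hker : ∀ x, R *ᵥ x = 0 → P *ᵥ x = x) : IsUnit (R + P) := by
  rw [← mulVec_injective_iff_isUnit, ← coe_mulVecLin, injective_iff_map_eq_zero]
  intro x hx
  rw [mulVecLin_apply] at hx
  have hPx : P *ᵥ x = 0 := by
    have := congrArg (P *ᵥ ·) hx
    rwa [mulVec_mulVec, Matrix.mul_add, hPR, hPP, zero_add, mulVec_zero] at this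
  rw [← hker x (by simpa [add_mulVec, hPx] using hx), hPx]

theorem exists_eq_mul_of_mul_eq_zero (hPR : P * R = 0) (hPP : P * P = P)
    (hker : ∀ x, R *ᵥ x = 0 → P *ᵥ x = x) {X : Matrix n m K} (hX : P * X = 0) :
    ∃ Y : Matrix n m K, X = R * Y := by
  have hdet := (isUnit_iff_isUnit_det _).mp (isUnit_add_of_mul_eq_zero hPR hPP hker)
  have hPinv : P * (R + P)⁻¹ = P := by
    conv_rhs => rw [← Matrix.mul_one P, ← mul_nonsing_inv _ hdet, ← Matrix.mul_assoc,
      Matrix.mul_add, hPR, hPP, zero_add]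
  have hRinv : R * (R + P)⁻¹ = 1 - P := by
    rw [eq_sub_iff_add_eq]
    nth_rw 2 [← hPinv]
    rw [← Matrix.add_mul, mul_nonsing_inv _ hdet]
  exact ⟨(R + P)⁻¹ * X, by
    rw [← Matrix.mul_assoc, hRinv, Matrix.sub_mul, hX, Matrix.one_mul, sub_zero]⟩

theorem mul_pow_mul_eq_zero_of_mul_mul_eq_zero {A : Matrix n n K} (hPR : P * R = 0)
    (hPP : P * P = P) (hker : ∀ x, R *ᵥ x = 0 → P *ᵥ x = x) (hPAR : P * A * R = 0) (ℓ : ℕ) :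
    P * A ^ ℓ * R = 0 := by
  induction ℓ with
  | zero => rwa [pow_zero, Matrix.mul_one]
  | succ k ih =>
    obtain ⟨Y, hY⟩ := exists_eq_mul_of_mul_eq_zero hPR hPP hker (X := A ^ k * R)
      (by rw [← Matrix.mul_assoc, ih])
    rw [pow_succ', Matrix.mul_assoc, Matrix.mul_assoc, hY, ← Matrix.mul_assoc,
      ← Matrix.mul_assoc, hPAR, Matrix.zero_mul]

end Matrix

theorem stmt_10_general {n : ℕ} (A : Matrix (Fin n) (Fin n) ℂ)
    (B : Matrix (Fin n) (Fin 1) ℂ)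
    (R : Matrix (Fin n) (Fin n) ℂ) (hR : R.PosSemidef)
    (H : Matrix (Fin 1) (Fin n) ℂ)
    (hstein : R - A * R * Aᴴ = B * H + Hᴴ * Bᴴ)
    (P : Matrix (Fin n) (Fin n) ℂ) (hPh : P.IsHermitian) (hPP : P * P = P)
    (hPrange : ∀ x : Fin n → ℂ, R *ᵥ x = 0 ↔ P *ᵥ x = x)
    (hPB : P * B = 0) :
    (∀ ℓ : ℕ, P * A ^ ℓ * R = 0) ∧
    (∀ x : Fin n → ℂ, (∃ y, x = R *ᵥ y) → ∃ z, A *ᵥ x = R *ᵥ z) ∧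
    (∀ ℓ : ℕ, ∀ u : Fin 1 → ℂ, ∃ z, (A ^ ℓ * B) *ᵥ u = R *ᵥ z) := by
  have hPR : P * R = 0 := by
    rw [← hPh.eq, ← hR.isHermitian.eq, ← conjTranspose_mul,
      mul_eq_zero_of_mulVec_eq_self hPP fun x => (hPrange x).2, conjTranspose_zero]
  have factor : ∀ {m : Type} {X : Matrix (Fin n) m ℂ}, P * X = 0 →
      ∃ Y : Matrix (Fin n) m ℂ, X = R * Y :=
    exists_eq_mul_of_mul_eq_zero hPR hPP fun x => (hPrange x).1
  have hPAR : P * A * R = 0 := hR.mul_eq_zero_of_mul_mul_conjTranspose_eq_zero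
    (mul_mul_mul_conjTranspose_eq_zero_of_stein hstein hPh hPR hPB)
  have hPAkR := mul_pow_mul_eq_zero_of_mul_mul_eq_zero hPR hPP (fun x => (hPrange x).1) hPAR
  refine ⟨hPAkR, ?_, fun ℓ u => ?_⟩
  · rintro x ⟨y, rfl⟩
    obtain ⟨Y, hY⟩ := factor (X := A * R) (by rw [← Matrix.mul_assoc, hPAR])
    exact ⟨Y *ᵥ y, by rw [mulVec_mulVec, hY, mulVec_mulVec]⟩
  · obtain ⟨C, rfl⟩ := factor hPB
    obtain ⟨Y, hY⟩ := factor (X := A ^ ℓ * (R * C)) (by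
      rw [← Matrix.mul_assoc, ← Matrix.mul_assoc, hPAkR, Matrix.zero_mul])
    exact ⟨Y *ᵥ u, by rw [hY, mulVec_mulVec]⟩

/-- Scalar-input case: if `Π_{N(R)} B = 0` then `Π_{N(R)} Aℓ R = 0` for all
`ℓ ≥ 0`; in particular the range of `R` is `A`-invariant and contains the
ranges of all `Aℓ B`. -/
theorem stmt_10 {n : ℕ} (A : Matrix (Fin n) (Fin n) ℂ)
    (B : Matrix (Fin n) (Fin 1) ℂ)
    (hreach : (Matrix.of fun (i : Fin n) (p : Fin n × Fin 1) =>
        (A ^ (p.1 : ℕ) * B) i p.2).rank = n)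
    (R : Matrix (Fin n) (Fin n) ℂ) (hR : R.PosSemidef)
    (H : Matrix (Fin 1) (Fin n) ℂ)
    (hstein : R - A * R * Aᴴ = B * H + Hᴴ * Bᴴ)
    (P : Matrix (Fin n) (Fin n) ℂ) (hPh : P.IsHermitian) (hPP : P * P = P)
    (hPrange : ∀ x : Fin n → ℂ, R *ᵥ x = 0 ↔ P *ᵥ x = x)
    (hPB : P * B = 0) :
    (∀ ℓ : ℕ, P * A ^ ℓ * R = 0) ∧
    (∀ x : Fin n → ℂ, (∃ y, x = R *ᵥ y) → ∃ z, A *ᵥ x = R *ᵥ z) ∧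
    (∀ ℓ : ℕ, ∀ u : Fin 1 → ℂ, ∃ z, (A ^ ℓ * B) *ᵥ u = R *ᵥ z) :=
  stmt_10_general A B R hR H hstein P hPh hPP hPrange hPB
end

section
/- Let D ∈ ℂ^{m×m}, C ∈ ℂ^{m×n}, A ∈ ℂ^{n×n}, B ∈ ℂ^{n×m}, and suppose there exists a Hermitian positive semidefinite P ∈ ℂ^{n×n} with P - A* P A = 0, C* - A* P B = 0, and D + D* - B* P B = 0. Then for every z on the unit circle at which (Iₙ - z A) is invertible, the rational matrix function F(z) = D + z C (Iₙ - z A)⁻¹ B satisfies F(z) + F(z)* = 0 (its Hermitian part vanishes on the unit circle). -/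
open Matrix ComplexOrder

/-! With `N = 1 - zA` and `M = N⁻¹`, the identity
`Nᴴ P N + z Nᴴ P A + z̄ Aᴴ P N = P - |z|² Aᴴ P A`, conjugated by `M`, gives
`P + z P A M + z̄ Mᴴ Aᴴ P = Mᴴ (P - |z|² Aᴴ P A) M`. Sandwiching this between `Bᴴ` and `B` and
using `C = Bᴴ P A` and `D + Dᴴ = Bᴴ P B` turns `F(z) + F(z)ᴴ` into
`Bᴴ Mᴴ (P - |z|² Aᴴ P A) M B`, which vanishes when `|z| = 1` and `Aᴴ P A = P`. -/

namespace Matrix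

variable {ι κ R : Type*} [Fintype ι] [DecidableEq ι] [CommRing R] [StarRing R]

noncomputable def transferFunction (A : Matrix ι ι R) (B : Matrix ι κ R) (C : Matrix κ ι R)
    (D : Matrix κ κ R) (z : R) : Matrix κ κ R :=
  D + z • (C * (1 - z • A)⁻¹ * B)

theorem conjTranspose_one_sub_smul_mul_mul_add (A P : Matrix ι ι R) (z : R) :
    (1 - z • A)ᴴ * P * (1 - z • A) + z • ((1 - z • A)ᴴ * P * A)
      + star z • (Aᴴ * P * (1 - z • A)) = P - (star z * z) • (Aᴴ * P * A) := by
  rw [conjTranspose_sub, conjTranspose_one, conjTranspose_smul]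
  simp only [sub_mul, mul_sub, one_mul, mul_one, Matrix.smul_mul, Matrix.mul_smul, smul_sub,
    smul_smul, Matrix.mul_assoc]
  module

theorem add_smul_mul_inv_one_sub_smul_add_star_smul (A P : Matrix ι ι R) {z : R}
    (hz : IsUnit (1 - z • A).det) :
    P + z • (P * A * (1 - z • A)⁻¹) + star z • ((1 - z • A)⁻¹ᴴ * Aᴴ * P)
      = (1 - z • A)⁻¹ᴴ * (P - (star z * z) • (Aᴴ * P * A)) * (1 - z • A)⁻¹ := by
  rw [← conjTranspose_one_sub_smul_mul_mul_add]
  set N := 1 - z • A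
  have hNM : N * N⁻¹ = 1 := mul_nonsing_inv N hz
  have hMN : N⁻¹ᴴ * Nᴴ = 1 := by rw [← conjTranspose_mul, hNM, conjTranspose_one]
  simp only [Matrix.add_mul, Matrix.mul_add, Matrix.smul_mul, Matrix.mul_smul, ← Matrix.mul_assoc,
    hMN, one_mul]
  simp only [Matrix.mul_assoc, hNM, mul_one]

theorem transferFunction_add_conjTranspose_eq_zero {A P : Matrix ι ι R} {B : Matrix ι κ R}
    {C : Matrix κ ι R} {D : Matrix κ κ R} (hP : Pᴴ = P) (hA : Aᴴ * P * A = P)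
    (hC : Cᴴ = Aᴴ * P * B) (hD : D + Dᴴ = Bᴴ * P * B) {z : R} (hz : star z * z = 1)
    (hN : IsUnit (1 - z • A).det) :
    transferFunction A B C D z + (transferFunction A B C D z)ᴴ = 0 := by
  have hC' : C = Bᴴ * P * A := by
    rw [← conjTranspose_conjTranspose C, hC]
    simp only [conjTranspose_mul, conjTranspose_conjTranspose, hP, Matrix.mul_assoc]
  have hF : transferFunction A B C D z + (transferFunction A B C D z)ᴴ
      = Bᴴ * (P + z • (P * A * (1 - z • A)⁻¹) + star z • ((1 - z • A)⁻¹ᴴ * Aᴴ * P)) * B := by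
    simp only [transferFunction, conjTranspose_add, conjTranspose_smul, conjTranspose_mul, hC',
      conjTranspose_conjTranspose, hP]
    rw [add_add_add_comm, hD]
    simp only [Matrix.add_mul, Matrix.mul_add, Matrix.smul_mul, Matrix.mul_smul, Matrix.mul_assoc,
      add_assoc]
  rw [hF, add_smul_mul_inv_one_sub_smul_add_star_smul A P hN, hz, one_smul, hA, sub_self,
    Matrix.mul_zero, Matrix.zero_mul, Matrix.mul_zero, Matrix.zero_mul]

end Matrix

/-- Lossless direction of the positive-real lemma: if `P ⪰ 0` satisfies
`P - A* P A = 0`, `C* - A* P B = 0`, `D + D* - B* P B = 0`, then the Hermitian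
part of `F(z) = D + z C (I - zA)⁻¹ B` vanishes on the unit circle (wherever
`I - zA` is invertible). -/
theorem stmt_13 {n m : ℕ} (A : Matrix (Fin n) (Fin n) ℂ)
    (B : Matrix (Fin n) (Fin m) ℂ) (C : Matrix (Fin m) (Fin n) ℂ)
    (D : Matrix (Fin m) (Fin m) ℂ)
    (P : Matrix (Fin n) (Fin n) ℂ) (hP : P.PosSemidef)
    (h1 : P - Aᴴ * P * A = 0)
    (h2 : Cᴴ - Aᴴ * P * B = 0)
    (h3 : D + Dᴴ - Bᴴ * P * B = 0) :
    ∀ z : ℂ, ‖z‖ = 1 → IsUnit (1 - z • A).det →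
      (D + z • (C * (1 - z • A)⁻¹ * B)) +
        (D + z • (C * (1 - z • A)⁻¹ * B))ᴴ = 0 := by
  intro z hz hN
  have hz' : star z * z = 1 := by
    rw [Complex.star_def, ← Complex.normSq_eq_conj_mul_self, Complex.normSq_eq_norm_sq, hz]
    norm_num
  exact transferFunction_add_conjTranspose_eq_zero hP.1 (sub_eq_zero.mp h1).symm
    (sub_eq_zero.mp h2) (sub_eq_zero.mp h3) hz' hN
end

section
/- Let A, B be as in the length-2 block-Toeplitz case: A = [[O₂, O₂],[I₂, O₂]] (4×4) and B = [I₂; O₂] (4×2). Let R be the 4×4 matrix with rows (1, 0, 1/2, 3/4), (0, 1, 0, 1/2), (1/2, 0, 1, 0), (3/4, 1/2, 0, 1). Then R is positive semidefinite and singular (the row vector v = (-2, -1, 1, 2) satisfies v R = 0), and the only 2×2 Hermitian positive semidefinite matrix Q such that R - (I₂ ⊗ Q) is positive semidefinite is Q = 0. In particular no nonzero white-noise covariance component can be extracted from R. -/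
open Matrix ComplexOrder

/-!
`R = Mᴴ diag(1, 1, 3/4) M` (an `LDLᴴ` factorization), so `R ⪰ 0`, and `R v = 0` for
`v = (-2, -1, 1, 2)`. If `0 ⪯ diag(Q, Q) ⪯ R`, then `v* diag(Q, Q) v ≤ v* R v = 0`, so the
positive semidefinite `diag(Q, Q)` annihilates `v`: `Q` kills both halves `(-2, -1)` and `(1, 2)`,
which span `ℂ²`, hence `Q = 0`.
-/

namespace Matrix

variable {m n 𝕜 : Type*} [Fintype m] [Fintype n] [RCLike 𝕜]

theorem PosSemidef.fromBlocks_zero_zero {A : Matrix m m 𝕜} {D : Matrix n n 𝕜}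
    (hA : A.PosSemidef) (hD : D.PosSemidef) : (fromBlocks A 0 0 D).PosSemidef := by
  refine .of_dotProduct_mulVec_nonneg
    (hA.isHermitian.fromBlocks (by simp) hD.isHermitian) fun x ↦ ?_
  rw [← Sum.elim_comp_inl_inr x, fromBlocks_mulVec]
  simp only [zero_mulVec, add_zero, zero_add, Function.star_sumElim, sumElim_dotProduct_sumElim]
  exact add_nonneg (hA.dotProduct_mulVec_nonneg _) (hD.dotProduct_mulVec_nonneg _)

theorem PosSemidef.mulVec_eq_zero_of_sub {R D : Matrix n n 𝕜} (hD : D.PosSemidef)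
    (hRD : (R - D).PosSemidef) {v : n → 𝕜} (hv : R *ᵥ v = 0) : D *ᵥ v = 0 := by
  rw [← hD.dotProduct_mulVec_zero_iff]
  refine le_antisymm ?_ (hD.dotProduct_mulVec_nonneg v)
  simpa [sub_mulVec, hv] using hRD.dotProduct_mulVec_nonneg v

theorem reindex_fromBlocks_zero_zero_mulVec_eq_zero {l α : Type*} [Fintype l]
    [NonUnitalNonAssocSemiring α] (e : l ⊕ m ≃ n) {A : Matrix l l α} {D : Matrix m m α}
    {v : n → α} (h : reindex e e (fromBlocks A 0 0 D) *ᵥ v = 0) :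
    A *ᵥ (v ∘ e ∘ Sum.inl) = 0 ∧ D *ᵥ (v ∘ e ∘ Sum.inr) = 0 := by
  rwa [reindex_apply, submatrix_mulVec_equiv, fromBlocks_mulVec, Equiv.comp_symm_eq, Pi.zero_comp,
    ← Sum.elim_zero_zero, Sum.elim_eq_iff, zero_mulVec, zero_mulVec, add_zero, zero_add] at h

theorem eq_zero_of_mulVec_eq_zero_fin_two {K : Type*} [Field K] [CharZero K]
    {Q : Matrix (Fin 2) (Fin 2) K} (hu : Q *ᵥ ![-2, -1] = 0) (hw : Q *ᵥ ![1, 2] = 0) : Q = 0 := by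
  refine Matrix.ext fun i ↦ Fin.forall_fin_two.mpr ?_
  have hui : -2 * Q i 0 - Q i 1 = 0 := by
    simpa [mulVec, dotProduct, sub_eq_add_neg, mul_comm] using congrFun hu i
  have hwi : Q i 0 + 2 * Q i 1 = 0 := by
    simpa [mulVec, dotProduct, mul_comm] using congrFun hw i
  simp only [zero_apply]
  constructor <;> refine mul_left_cancel₀ (three_ne_zero (α := K)) ?_
  · linear_combination (-2) * hui - hwi
  · linear_combination hui + 2 * hwi

end Matrix

noncomputable def stateCov : Matrix (Fin 4) (Fin 4) ℂ :=
  !![1, 0, 1/2, 3/4;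
     0, 1, 0, 1/2;
     1/2, 0, 1, 0;
     3/4, 1/2, 0, 1]

noncomputable def stateCovFactor : Matrix (Fin 3) (Fin 4) ℂ :=
  !![1, 0, 1/2, 3/4;
     0, 1, 0, 1/2;
     0, 0, 1, -1/2]

theorem stateCov_eq_conjTranspose_mul_diagonal_mul :
    stateCov = stateCovFactorᴴ * diagonal (![1, 1, 3/4] : Fin 3 → ℂ) * stateCovFactor := by
  ext i j
  fin_cases i <;> fin_cases j <;>
    simp [stateCov, stateCovFactor, mul_apply, Fin.sum_univ_three, map_ofNat] <;> norm_num

theorem stateCov_posSemidef : stateCov.PosSemidef := by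
  rw [stateCov_eq_conjTranspose_mul_diagonal_mul]
  refine PosSemidef.conjTranspose_mul_mul_same (posSemidef_diagonal_iff.mpr fun i ↦ ?_) _
  fin_cases i <;> norm_num [Complex.le_def]

theorem vecMul_stateCov : vecMul ![-2, -1, 1, 2] stateCov = 0 := by
  ext j
  fin_cases j <;> simp [stateCov, vecMul, dotProduct, Fin.sum_univ_four] <;> norm_num

theorem stateCov_mulVec : stateCov *ᵥ ![-2, -1, 1, 2] = 0 := by
  ext i
  fin_cases i <;> simp [stateCov, mulVec, dotProduct, Fin.sum_univ_four] <;> norm_num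

/-- Example: the block-Toeplitz state covariance `R` below is PSD and singular
(annihilated on the left by `v = (-2,-1,1,2)`), yet the only PSD white-noise
covariance `Q` with `R - diag(Q,Q) ⪰ 0` is `Q = 0`. -/
theorem stmt_15 :
    let R : Matrix (Fin 4) (Fin 4) ℂ :=
      !![1, 0, 1/2, 3/4;
         0, 1, 0, 1/2;
         1/2, 0, 1, 0;
         3/4, 1/2, 0, 1]
    R.PosSemidef ∧
    Matrix.vecMul ![-2, -1, 1, 2] R = 0 ∧
    (∀ Q : Matrix (Fin 2) (Fin 2) ℂ, Q.PosSemidef →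
      (R - Matrix.reindex finSumFinEquiv finSumFinEquiv
            (Matrix.fromBlocks Q 0 0 Q)).PosSemidef → Q = 0) := by
  refine ⟨stateCov_posSemidef, vecMul_stateCov, fun Q hQ hRQ ↦ ?_⟩
  have hdiag : (reindex finSumFinEquiv finSumFinEquiv (fromBlocks Q 0 0 Q)).PosSemidef :=
    (hQ.fromBlocks_zero_zero hQ).submatrix _
  obtain ⟨hu, hw⟩ := reindex_fromBlocks_zero_zero_mulVec_eq_zero _
    (hdiag.mulVec_eq_zero_of_sub hRQ stateCov_mulVec)
  refine eq_zero_of_mulVec_eq_zero_fin_two ?_ ?_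
  · convert hu using 2; ext i; fin_cases i <;> rfl
  · convert hw using 2; ext i; fin_cases i <;> rfl
end

section
/- Let R be the 4×4 Hermitian matrix with block-Toeplitz structure R = [[R₀, R₁],[R₁*, R₀]] where R₀ = [[a, b],[b̄, c]] and R₁ = [[1/2, 3/4],[0, 0]]... specifically R has rows (a, b, 1/2, 3/4), (b̄, c, 0, 0), (1/2, 0, a, b), (3/4, 0, b̄, c). If R is positive semidefinite, then the dimension of the null space of R is at most 1. In particular, dim N(R) < 2 = rank(B) for B = [I₂; O₂], so the condition 'B* Π_{N(R)} B invertible' fails for every PSD matrix of this form. -/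
/-!
Positive semidefiniteness of `R` makes its principal minors nonnegative. The diagonal entry `a`
and the minor `a c - 9/16` on rows `{0, 3}` force `a > 0` and `c > 0`, and then the minor
`a (a c - |b|²) - c/4` on rows `{0, 1, 2}` forces `a c - |b|² > 0`, i.e. `R₀` is invertible.
Rows `1, 2, 3` of `R x = 0` then determine `x` from `x 0`, so the null space is at most a line.
-/

open Matrix ComplexOrder

theorem Submodule.exists_smul_add_smul_eq_zero_of_disjoint_ker {K V : Type*} [Field K]
    [AddCommGroup V] [Module K V] {p : Submodule K V} {f : V →ₗ[K] K}
    (hf : Disjoint p (LinearMap.ker f)) {v w : V} (hv : v ∈ p) (hw : w ∈ p) :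
    ∃ α β : K, (α, β) ≠ 0 ∧ α • v + β • w = 0 := by
  by_cases hv0 : f v = 0
  · exact ⟨1, 0, by simp, by simpa using Submodule.disjoint_def.mp hf v hv hv0⟩
  · refine ⟨f w, -f v, by simp [hv0], Submodule.disjoint_def.mp hf _ ?_ ?_⟩
    · exact p.add_mem (p.smul_mem _ hv) (p.smul_mem _ hw)
    · simp [mul_comm]

noncomputable def toeplitzR (a c : ℝ) (b : ℂ) : Matrix (Fin 4) (Fin 4) ℂ :=
  !![(a : ℂ), b, 1/2, 3/4;
     (starRingEnd ℂ) b, (c : ℂ), 0, 0;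
     1/2, 0, (a : ℂ), b;
     3/4, 0, (starRingEnd ℂ) b, (c : ℂ)]

namespace Matrix.PosSemidef

variable {a c : ℝ} {b : ℂ}

theorem toeplitzR_nonneg_left (h : (toeplitzR a c b).PosSemidef) : 0 ≤ a := by
  simpa [toeplitzR] using h.diag_nonneg (i := 0)

theorem toeplitzR_le_mul (h : (toeplitzR a c b).PosSemidef) : 9 / 16 ≤ a * c := by
  have hsub : (toeplitzR a c b).submatrix ![0, 3] ![0, 3] = !![(a : ℂ), 3/4; 3/4, c] := by
    ext i j; fin_cases i <;> fin_cases j <;> rfl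
  have hdet : det !![(a : ℂ), 3/4; 3/4, c] = ((a * c - 9 / 16 : ℝ) : ℂ) := by
    rw [det_fin_two_of]; push_cast; ring
  have := (h.submatrix ![0, 3]).det_nonneg
  rw [hsub, hdet, Complex.zero_le_real] at this
  linarith

theorem toeplitzR_le_mul_sub_normSq (h : (toeplitzR a c b).PosSemidef) :
    c / 4 ≤ a * (a * c - Complex.normSq b) := by
  have hsub : (toeplitzR a c b).submatrix ![0, 1, 2] ![0, 1, 2] =
      !![(a : ℂ), b, 1/2; (starRingEnd ℂ) b, c, 0; 1/2, 0, a] := by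
    ext i j; fin_cases i <;> fin_cases j <;> rfl
  have hdet : det !![(a : ℂ), b, 1/2; (starRingEnd ℂ) b, c, 0; 1/2, 0, a] =
      ((a * (a * c - Complex.normSq b) - c / 4 : ℝ) : ℂ) := by
    simp only [det_fin_three, of_apply, cons_val', cons_val_zero, cons_val_one, cons_val,
      cons_val_fin_one, mul_zero, sub_zero, zero_mul, add_zero]
    push_cast [← Complex.mul_conj]
    ring
  have := (h.submatrix ![0, 1, 2]).det_nonneg
  rw [hsub, hdet, Complex.zero_le_real] at this
  linarith

theorem toeplitzR_pos (h : (toeplitzR a c b).PosSemidef) :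
    0 < c ∧ 0 < a * c - Complex.normSq b := by
  have ha := h.toeplitzR_nonneg_left
  have hac := h.toeplitzR_le_mul
  have hD := h.toeplitzR_le_mul_sub_normSq
  have ha' : 0 < a := ha.lt_of_ne (by rintro rfl; linarith)
  have hc : 0 < c := pos_of_mul_pos_right (by linarith) ha
  exact ⟨hc, pos_of_mul_pos_right (by linarith) ha'.le⟩

end Matrix.PosSemidef

theorem toeplitzR_eq_zero_of_mulVec_eq_zero {a c : ℝ} {b : ℂ} (hc : c ≠ 0)
    (hD : a * c - Complex.normSq b ≠ 0) {x : Fin 4 → ℂ} (hx : toeplitzR a c b *ᵥ x = 0)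
    (hx0 : x 0 = 0) : x = 0 := by
  have hD' : (a : ℂ) * c - b * (starRingEnd ℂ) b ≠ 0 := by
    rw [Complex.mul_conj]; exact_mod_cast hD
  have e1 := congrFun hx 1
  have e2 := congrFun hx 2
  have e3 := congrFun hx 3
  simp only [toeplitzR, mulVec, dotProduct, Fin.sum_univ_four, of_apply, cons_val', cons_val,
    cons_val_zero, cons_val_one, cons_val_fin_one, hx0, mul_zero, zero_mul, zero_add, add_zero,
    Pi.zero_apply] at e1 e2 e3
  have x1 : x 1 = 0 := (mul_eq_zero.mp e1).resolve_left (by exact_mod_cast hc)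
  have x2 : ((a : ℂ) * c - b * (starRingEnd ℂ) b) * x 2 = 0 := by
    linear_combination (c : ℂ) * e2 - b * e3
  have x3 : ((a : ℂ) * c - b * (starRingEnd ℂ) b) * x 3 = 0 := by
    linear_combination (a : ℂ) * e3 - (starRingEnd ℂ) b * e2
  ext i
  fin_cases i
  exacts [hx0, x1, (mul_eq_zero.mp x2).resolve_left hD', (mul_eq_zero.mp x3).resolve_left hD']

/-- Example: for the block-Toeplitz matrix `R` below (any `a, c : ℝ`, `b : ℂ`),
positive semidefiniteness forces the null space of `R` to have dimension at
most 1: any two null vectors are linearly dependent. -/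
theorem stmt_17 (a c : ℝ) (b : ℂ) :
    let R : Matrix (Fin 4) (Fin 4) ℂ :=
      !![(a : ℂ), b, 1/2, 3/4;
         (starRingEnd ℂ) b, (c : ℂ), 0, 0;
         1/2, 0, (a : ℂ), b;
         3/4, 0, (starRingEnd ℂ) b, (c : ℂ)]
    R.PosSemidef →
      ∀ v w : Fin 4 → ℂ, R *ᵥ v = 0 → R *ᵥ w = 0 →
        ∃ α β : ℂ, (α, β) ≠ 0 ∧ α • v + β • w = 0 := by
  intro R hR v w hv hw
  obtain ⟨hc, hD⟩ := hR.toeplitzR_pos (a := a) (c := c) (b := b)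
  have hker : Disjoint (LinearMap.ker R.mulVecLin) (LinearMap.ker (LinearMap.proj 0)) :=
    Submodule.disjoint_def.mpr fun x hx hx0 ↦
      toeplitzR_eq_zero_of_mulVec_eq_zero hc.ne' hD.ne' hx hx0
  exact Submodule.exists_smul_add_smul_eq_zero_of_disjoint_ker hker hv hw
end
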